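/- arXiv:math-ph/0610012 — 4 statements merged into one kernel-verified Lean document; each statement's English description precedes it below -/
import Mathlib

section
/- The angle θ = 2·arctan(1/2) is an irrational multiple of π; equivalently, the rotation by θ has infinite order in SO(2). -/
open Complex

/-- The homomorphism `ℤ[i] → ZMod 5` sending `i ↦ 2`. -/
noncomputable def gaussToZMod5 : GaussianInt →+* ZMod 5 :=
  Zsqrtd.lift ⟨2, by decide⟩

lemma gauss_pow_ne (n : ℕ) (hn : n ≠ 0) :
    ((⟨3, 4⟩ : GaussianInt) : ℂ) ^ n ≠ (5 : ℂ) ^ n := by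
  intro h
  have h' : (⟨3, 4⟩ : GaussianInt) ^ n = (5 : GaussianInt) ^ n := by
    apply GaussianInt.toComplex_injective
    simpa [map_pow, map_ofNat] using h
  have hmap := congrArg gaussToZMod5 h'
  simp only [map_pow] at hmap
  have h3 : gaussToZMod5 (⟨3, 4⟩ : GaussianInt) = 1 := by
    simp [gaussToZMod5, Zsqrtd.lift]; decide
  have h5 : gaussToZMod5 (5 : GaussianInt) = 0 := by
    rw [show (5 : GaussianInt) = ((5:ℤ) : GaussianInt) by norm_num, map_intCast]
    decide
  rw [h3, h5, one_pow, zero_pow hn] at hmap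
  exact absurd hmap (by decide)

/-- The angle θ = 2·arctan(1/2) is an irrational multiple of π. -/
theorem pinwheel_angle_irrational : Irrational (2 * Real.arctan (1/2) / Real.pi) := by
  set θ : ℝ := 2 * Real.arctan (1/2) with hθ
  rintro ⟨q, hq⟩
  have hpi : (Real.pi : ℝ) ≠ 0 := Real.pi_ne_zero
  have hθq : θ = q * Real.pi := by
    field_simp at hq
    linarith [hq]
  set s : ℝ := Real.sqrt (1 + (1/2 : ℝ)^2) with hs
  have hs2 : s ^ 2 = 5 / 4 := by
    rw [hs, Real.sq_sqrt (by positivity)]; norm_num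
  have hspos : 0 < s := Real.sqrt_pos.2 (by positivity)
  have hcos : Real.cos θ = 3/5 := by
    rw [hθ, Real.cos_two_mul, Real.cos_arctan, div_pow, one_pow, hs2]
    norm_num
  have hsin : Real.sin θ = 4/5 := by
    rw [hθ, Real.sin_two_mul, Real.sin_arctan, Real.cos_arctan]
    field_simp
    nlinarith [hs2]
  -- exp(θ i) = (3 + 4i)/5
  have hexp : Complex.exp (θ * I) = (3 + 4 * I) / 5 := by
    rw [Complex.exp_mul_I, ← Complex.ofReal_cos, ← Complex.ofReal_sin, hcos, hsin]
    push_cast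
    ring
  set n : ℕ := 2 * q.den with hn
  have hnne : n ≠ 0 := by positivity
  have hqden : (q : ℝ) * q.den = (q.num : ℝ) := by
    exact_mod_cast congrArg (Rat.cast : ℚ → ℝ) (Rat.mul_den_eq_num q)
  have key : (n : ℝ) * θ = q.num * (2 * Real.pi) := by
    rw [hθq, hn]
    push_cast
    linear_combination (2 * Real.pi) * hqden
  have hpow : Complex.exp (θ * I) ^ n = 1 := by
    rw [← Complex.exp_nat_mul]
    have hc : (n : ℂ) * (↑θ * I) = q.num * (2 * Real.pi * I) := by
      rw [show (n : ℂ) * (↑θ * I) = (((n : ℝ) * θ : ℝ) : ℂ) * I by push_cast; ring, key]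
      push_cast
      ring
    rw [hc]
    exact Complex.exp_int_mul_two_pi_mul_I q.num
  rw [hexp, div_pow] at hpow
  have h5 : (5 : ℂ) ^ n ≠ 0 := pow_ne_zero _ (by norm_num)
  have hfin : (3 + 4 * I) ^ n = (5 : ℂ) ^ n := by
    field_simp at hpow
    exact hpow
  apply gauss_pow_ne n hnne
  rw [GaussianInt.toComplex_def']
  push_cast
  convert hfin using 2
end

section
/- The angle θ = arccos(1/4) is an irrational multiple of π. -/
private def bseq : ℕ → ℤ
  | 0 => 2
  | 1 => 1
  | (n+2) => bseq (n+1) - 4 * bseq n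

private lemma bseq_mod (n : ℕ) (hn : 1 ≤ n) : bseq n % 4 = 1 := by
  induction n using Nat.strong_induction_on with
  | _ n ih =>
    match n with
    | 1 => rfl
    | 2 => rfl
    | (n+3) =>
      have h1 := ih (n+2) (by omega) (by omega)
      show (bseq (n+2) - 4 * bseq (n+1)) % 4 = 1
      omega

private lemma cos_formula (θ : ℝ) (hθ : Real.cos θ = 1/4) (n : ℕ) (hn : 1 ≤ n) :
    Real.cos (n * θ) = (bseq n : ℝ) / 2 ^ (n+1) := by
  induction n using Nat.strong_induction_on with
  | _ n ih =>
    match n with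
    | 1 =>
      have : ((1:ℕ) : ℝ) * θ = θ := by push_cast; ring
      rw [this, hθ]
      norm_num [bseq]
    | 2 =>
      have : ((2:ℕ) : ℝ) * θ = 2 * θ := by push_cast; ring
      rw [this, Real.cos_two_mul, hθ]
      show _ = ((bseq 2 : ℤ) : ℝ) / 2 ^ 3
      norm_num [bseq]
    | (n+3) =>
      have h1 := ih (n+2) (by omega) (by omega)
      have h0 := ih (n+1) (by omega) (by omega)
      have key : Real.cos ((n+3 : ℕ) * θ) =
          2 * Real.cos ((n+2 : ℕ) * θ) * Real.cos θ - Real.cos ((n+1 : ℕ) * θ) := by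
        have e1 : ((n+3 : ℕ) : ℝ) * θ = ((n+2 : ℕ) : ℝ) * θ + θ := by
          push_cast; ring
        have e2 : ((n+1 : ℕ) : ℝ) * θ = ((n+2 : ℕ) : ℝ) * θ - θ := by
          push_cast; ring
        rw [e1, e2, Real.cos_add, Real.cos_sub]; ring
      rw [key, h1, h0, hθ]
      show _ = ((bseq (n+2) - 4 * bseq (n+1) : ℤ) : ℝ) / 2 ^ (n+3+1)
      push_cast
      field_simp
      ring

/-- The angle θ = arccos(1/4) is an irrational multiple of π. -/
theorem arccos_quarter_irrational : Irrational (Real.arccos (1/4) / Real.pi) := by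
  set θ := Real.arccos (1/4) with hθdef
  have hcos : Real.cos θ = 1/4 := Real.cos_arccos (by norm_num) (by norm_num)
  rintro ⟨q, hq⟩
  have hπ : Real.pi ≠ 0 := Real.pi_ne_zero
  have hθ : θ = (q : ℝ) * Real.pi := by
    field_simp at hq
    linarith [hq]
  set d := q.den with hd
  have hd1 : 1 ≤ d := q.pos
  have hnum : (d : ℝ) * (q : ℝ) = (q.num : ℝ) := by
    have h := q.mul_den_eq_num
    have h2 : ((q * (q.den:ℚ) : ℚ) : ℝ) = ((q.num : ℚ) : ℝ) := by rw [h]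
    push_cast at h2
    linarith [h2]
  have h1 : Real.cos ((d : ℝ) * θ) = Real.cos ((q.num : ℝ) * Real.pi) := by
    rw [hθ, ← mul_assoc, hnum]
  have h2 : Real.cos ((d : ℝ) * θ) = (bseq d : ℝ) / 2 ^ (d+1) := cos_formula θ hcos d hd1
  have h3 : |(bseq d : ℝ) / 2 ^ (d+1)| = 1 := by
    rw [← h2, h1]
    exact Real.abs_cos_int_mul_pi q.num
  have h4 : |(bseq d : ℝ)| = 2 ^ (d+1) := by
    rw [abs_div] at h3
    have habs : |(2:ℝ) ^ (d+1)| = 2 ^ (d+1) := abs_of_pos (by positivity)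
    rw [habs, div_eq_one_iff_eq (by positivity)] at h3
    exact h3
  have h5 : |bseq d| = 2 ^ (d+1) := by exact_mod_cast h4
  have h6 := bseq_mod d hd1
  have h7 : (2:ℤ) ∣ 2 ^ (d+1) := dvd_pow_self 2 (by omega)
  rw [← h5, dvd_abs] at h7
  omega
end

section
/- If x ∈ 𝕊¹ and R is a rotation of the plane through an angle θ with θ/π irrational, then the orbit {R^n x : n ∈ ℕ} is equidistributed on the unit circle 𝕊¹ (with respect to normalized arc-length measure). -/
/-!
Weyl's argument. Parametrize the circle by `AddCircle (2π)`, so that the orbit becomes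
`φ + n • θ`. For `k ≠ 0` the character `fourier k` along the orbit is a geometric progression
with ratio `fourier k θ ≠ 1` (because `θ` has infinite order), so its Cesàro means tend to
`0 = ∫ fourier k`. Trigonometric polynomials are dense in `C(𝕊¹, ℂ)` and integration against
probability measures is `1`-Lipschitz in the sup norm, so the Cesàro means of every continuous
function converge to its integral: the empirical measures of the orbit converge weakly to Haar
measure. An arc has a null frontier, so by the portmanteau theorem the proportion of orbit points
in it converges to its Haar measure `(b - a) / 2π`.
-/

open scoped Classical

/-- Rotation of ℝ² through the angle θ. -/
noncomputable def rot (θ : ℝ) (p : ℝ × ℝ) : ℝ × ℝ :=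
  (Real.cos θ * p.1 - Real.sin θ * p.2, Real.sin θ * p.1 + Real.cos θ * p.2)

open MeasureTheory Filter Set Topology Finset Real
open scoped ENNReal

namespace MeasureTheory

variable {X : Type*} [MeasurableSpace X]

noncomputable def empiricalMeasure (u : ℕ → X) (N : ℕ) : Measure X :=
  (N : ℝ≥0∞)⁻¹ • ∑ n ∈ range N, Measure.dirac (u n)

instance (u : ℕ → X) (N : ℕ) : IsProbabilityMeasure (empiricalMeasure u (N + 1)) := by
  constructor
  simp only [empiricalMeasure, Measure.smul_apply, Measure.coe_finsetSum, Finset.sum_apply,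
    measure_univ, sum_const, card_range, nsmul_eq_mul, mul_one, smul_eq_mul]
  exact ENNReal.inv_mul_cancel (by simp) (by simp)

variable [MeasurableSingletonClass X]

theorem empiricalMeasure_real_apply (u : ℕ → X) (N : ℕ) (s : Set X) :
    (empiricalMeasure u N).real s = #{n ∈ range N | u n ∈ s} / N := by
  simp [measureReal_def, empiricalMeasure, Measure.dirac_apply, Set.indicator_apply,
    Finset.sum_boole, ENNReal.toReal_mul, div_eq_inv_mul]

theorem integral_empiricalMeasure {E : Type*} [NormedAddCommGroup E] [NormedSpace ℝ E]
    [CompleteSpace E] (u : ℕ → X) (N : ℕ) (f : X → E) :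
    ∫ x, f x ∂empiricalMeasure u N = (N : ℝ)⁻¹ • ∑ n ∈ range N, f (u n) := by
  rw [empiricalMeasure, integral_smul_measure, integral_finsetSum_measure
    (fun n _ => integrable_dirac enorm_lt_top)]
  simp only [ENNReal.toReal_inv, ENNReal.toReal_natCast, integral_dirac]

end MeasureTheory

namespace ContinuousMap

variable {X : Type*} [MeasurableSpace X] [TopologicalSpace X] [CompactSpace X]
  [OpensMeasurableSpace X] {E : Type*} [NormedAddCommGroup E] {𝕜 : Type*} [RCLike 𝕜]

theorem integrable (f : C(X, E)) (μ : Measure X) [IsFiniteMeasure μ] : Integrable f μ :=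
  f.continuous.integrable_of_hasCompactSupport (.of_compactSpace f)

variable [NormedSpace ℝ E] in
theorem lipschitzWith_integral (μ : Measure X) [IsProbabilityMeasure μ] :
    LipschitzWith 1 fun f : C(X, E) => ∫ x, f x ∂μ := by
  refine LipschitzWith.of_dist_le_mul fun f g => ?_
  rw [NNReal.coe_one, one_mul, dist_eq_norm, dist_eq_norm,
    ← integral_sub (f.integrable μ) (g.integrable μ)]
  simpa using norm_integral_le_of_norm_le_const (μ := μ)
    (Eventually.of_forall fun x => norm_coe_le_norm (f - g) x)

variable (𝕜) in
def tendstoIntegralSubmodule {ι : Type*} (l : Filter ι) (μs : ι → Measure X)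
    [∀ i, IsFiniteMeasure (μs i)] (μ : Measure X) [IsFiniteMeasure μ] : Submodule 𝕜 C(X, 𝕜) where
  carrier := {f | Tendsto (fun i => ∫ x, f x ∂μs i) l (𝓝 (∫ x, f x ∂μ))}
  zero_mem' := by simpa using tendsto_const_nhds
  add_mem' {f g} hf hg := by
    simp only [mem_ofPred_eq, add_apply] at hf hg ⊢
    rw [integral_add (f.integrable μ) (g.integrable μ)]
    refine (hf.add hg).congr fun i => ?_
    rw [integral_add (f.integrable _) (g.integrable _)]
  smul_mem' c f hf := by
    simp only [mem_ofPred_eq, smul_apply, smul_eq_mul, integral_const_mul] at hf ⊢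
    exact hf.const_mul c

theorem isClosed_tendstoIntegralSubmodule {ι : Type*} (l : Filter ι) (μs : ι → Measure X)
    [∀ i, IsProbabilityMeasure (μs i)] (μ : Measure X) [IsProbabilityMeasure μ] :
    IsClosed (tendstoIntegralSubmodule 𝕜 l μs μ : Set C(X, 𝕜)) :=
  ((LipschitzWith.uniformEquicontinuous _ 1 fun i =>
    lipschitzWith_integral (μs i)).equicontinuous).isClosed_setOfPred_tendsto
    (lipschitzWith_integral μ).continuous

end ContinuousMap

theorem tendsto_inv_smul_geom_sum {𝕜 : Type*} [NormedDivisionRing 𝕜] [NormedSpace ℝ 𝕜] {z : 𝕜}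
    (hz : ‖z‖ ≤ 1) (hz1 : z ≠ 1) :
    Tendsto (fun N : ℕ => (N : ℝ)⁻¹ • ∑ n ∈ range N, z ^ n) atTop (𝓝 0) := by
  refine tendsto_inv_atTop_nhds_zero_nat.zero_smul_isBoundedUnder_le
    (isBoundedUnder_of ⟨2 / ‖z - 1‖, fun N => ?_⟩)
  have hN : ‖z ^ N - 1‖ ≤ 2 := (norm_sub_le _ _).trans (by
    rw [norm_pow, norm_one]; linarith [pow_le_one₀ (norm_nonneg z) hz (n := N)])
  simp only [Function.comp_apply, geom_sum_eq hz1, norm_div]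
  gcongr

namespace AddCircle

variable {T : ℝ}

theorem fourier_add_nsmul (k : ℤ) (x α : AddCircle T) (n : ℕ) :
    fourier k (x + n • α) = fourier k x * fourier k α ^ n := by
  simp only [fourier_apply, zsmul_add, smul_comm k n α, toCircle_add, toCircle_nsmul,
    Circle.coe_mul, Circle.coe_pow]

theorem frontier_coe_image_Ico_subset (a b : ℝ) :
    frontier (((↑) : ℝ → AddCircle T) '' Ico a b) ⊆ {(a : AddCircle T), (b : AddCircle T)} := by
  have hclosure : closure (((↑) : ℝ → AddCircle T) '' Ico a b) ⊆ (↑) '' Icc a b :=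
    closure_minimal (image_mono Ico_subset_Icc_self)
      (isCompact_Icc.image (f := ((↑) : ℝ → AddCircle T)) continuous_quotient_mk').isClosed
  have hinterior : ((↑) : ℝ → AddCircle T) '' Ioo a b ⊆ interior ((↑) '' Ico a b) :=
    interior_maximal (image_mono Ioo_subset_Ico_self)
      (QuotientAddGroup.isOpenMap_coe _ isOpen_Ioo)
  rintro _ ⟨hc, hi⟩
  obtain ⟨t, ⟨hat, htb⟩, rfl⟩ := hclosure hc
  rcases hat.eq_or_lt with rfl | hat
  · exact Or.inl rfl
  rcases htb.eq_or_lt with rfl | htb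
  · exact Or.inr rfl
  exact absurd (hinterior ⟨t, ⟨hat, htb⟩, rfl⟩) hi

variable [hT : Fact (0 < T)]

variable (T) in
noncomputable def haarProbabilityMeasure : ProbabilityMeasure (AddCircle T) :=
  ⟨haarAddCircle, inferInstance⟩

theorem integral_fourier_of_ne_zero {k : ℤ} (hk : k ≠ 0) :
    ∫ x, fourier k x ∂(haarAddCircle : Measure (AddCircle T)) = 0 :=
  integral_eq_zero_of_add_right_eq_neg (fourier_add_half_inv_index hk hT.out)

theorem tendsto_haarProbabilityMeasure_of_tendsto_integral_fourier {ι : Type*} {l : Filter ι}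
    {μs : ι → ProbabilityMeasure (AddCircle T)}
    (h : ∀ k : ℤ, k ≠ 0 →
      Tendsto (fun i => ∫ x, fourier k x ∂(μs i : Measure (AddCircle T))) l (𝓝 0)) :
    Tendsto μs l (𝓝 (haarProbabilityMeasure T)) := by
  set S := ContinuousMap.tendstoIntegralSubmodule ℂ l (fun i => (μs i : Measure (AddCircle T)))
    haarAddCircle
  have hspan : Submodule.span ℂ (range fourier) ≤ S := by
    rw [Submodule.span_le]
    rintro _ ⟨k, rfl⟩
    rcases eq_or_ne k 0 with rfl | hk
    · simpa [S, ContinuousMap.tendstoIntegralSubmodule, fourier_zero] using tendsto_const_nhds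
    · change Tendsto _ _ _
      rw [integral_fourier_of_ne_zero hk]
      exact h k hk
  have hS : S = ⊤ := by
    rw [eq_top_iff, ← span_fourier_closure_eq_top]
    exact Submodule.topologicalClosure_minimal _ hspan
      (ContinuousMap.isClosed_tendstoIntegralSubmodule ..)
  rw [ProbabilityMeasure.tendsto_iff_forall_integral_rclike_tendsto ℂ]
  intro f
  exact (hS ▸ Submodule.mem_top : f.toContinuousMap ∈ S)

theorem fourier_ne_one_of_not_isOfFinAddOrder {α : AddCircle T} (hα : ¬IsOfFinAddOrder α)
    {k : ℤ} (hk : k ≠ 0) : fourier k α ≠ 1 := by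
  intro h
  have h0 : toCircle (k • α) = toCircle (0 : AddCircle T) := by
    rw [toCircle_zero]; exact Subtype.ext h
  exact hα (isOfFinAddOrder_iff_zsmul_eq_zero.2 ⟨k, hk, injective_toCircle hT.out.ne' h0⟩)

theorem tendsto_empiricalMeasure_add_nsmul {α : AddCircle T} (hα : ¬IsOfFinAddOrder α)
    (x : AddCircle T) :
    Tendsto (β := ProbabilityMeasure (AddCircle T))
      (fun N => ⟨empiricalMeasure (fun n => x + n • α) (N + 1), inferInstance⟩) atTop
      (𝓝 (haarProbabilityMeasure T)) := by
  refine tendsto_haarProbabilityMeasure_of_tendsto_integral_fourier fun k hk => ?_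
  have hz : ‖fourier k α‖ ≤ 1 := (Circle.norm_coe _).le
  have h := ((tendsto_inv_smul_geom_sum hz (fourier_ne_one_of_not_isOfFinAddOrder hα hk)).comp
    (tendsto_add_atTop_nat 1)).const_mul (fourier k x)
  rw [mul_zero] at h
  refine h.congr fun N => ?_
  change _ = ∫ y, fourier k y ∂empiricalMeasure (fun n => x + n • α) (N + 1)
  simp only [Function.comp_apply, integral_empiricalMeasure, fourier_add_nsmul, ← Finset.mul_sum,
    mul_smul_comm]

instance : NullSingletonClass (haarAddCircle : Measure (AddCircle T)) where
  measure_singleton y := by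
    have h := volume_closedBall (T := T) (x := y) 0
    rw [Metric.closedBall_zero, mul_zero, min_eq_right hT.out.le, ENNReal.ofReal_zero,
      volume_eq_smul_haarAddCircle, Measure.smul_apply, smul_eq_mul, mul_eq_zero] at h
    exact h.resolve_left (by simpa using hT.out)

theorem haarAddCircle_frontier_coe_image_Ico (a b : ℝ) :
    haarAddCircle (frontier (((↑) : ℝ → AddCircle T) '' Ico a b)) = 0 :=
  measure_mono_null (frontier_coe_image_Ico_subset a b) ((toFinite _).measure_zero _)

theorem volume_coe_image_Ioo {a b : ℝ} (hba : b ≤ a + T) :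
    volume (((↑) : ℝ → AddCircle T) '' Ioo a b) = ENNReal.ofReal (b - a) := by
  rw [add_projection_respects_measure T a
    (QuotientAddGroup.isOpenMap_coe _ isOpen_Ioo).measurableSet, ← Real.volume_Ioo]
  congr 1
  ext y
  refine ⟨fun ⟨⟨s, hs, hsy⟩, hy⟩ => ?_, fun hy => ⟨⟨y, hy, rfl⟩, hy.1, hy.2.le.trans hba⟩⟩
  rwa [← (coe_eq_coe_iff_of_mem_Ioc ⟨hs.1, hs.2.le.trans hba⟩ hy).1 hsy]

theorem haarAddCircle_real_coe_image_Ico {a b : ℝ} (hab : a ≤ b) (hba : b - a ≤ T) :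
    haarAddCircle.real (((↑) : ℝ → AddCircle T) '' Ico a b) = (b - a) / T := by
  have hsub : Ico a b ⊆ insert a (Ioo a b) := fun t ht =>
    ht.1.eq_or_lt.imp Eq.symm fun h => ⟨h, ht.2⟩
  have hIco : haarAddCircle (((↑) : ℝ → AddCircle T) '' Ico a b) =
      haarAddCircle ((↑) '' Ioo a b) :=
    le_antisymm ((measure_mono (image_mono hsub)).trans_eq
        (by rw [image_insert_eq, measure_congr (insert_ae_eq_self _ _)]))
      (measure_mono (image_mono Ioo_subset_Ico_self))
  have hIoo := volume_coe_image_Ioo (T := T) (a := a) (b := b) (by linarith)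
  rw [volume_eq_smul_haarAddCircle, Measure.smul_apply, smul_eq_mul] at hIoo
  have hreal := congrArg ENNReal.toReal hIoo
  rw [ENNReal.toReal_mul, ENNReal.toReal_ofReal hT.out.le,
    ENNReal.toReal_ofReal (sub_nonneg.2 hab)] at hreal
  rw [measureReal_def, hIco, eq_div_iff hT.out.ne', mul_comm, hreal]

theorem tendsto_card_filter_add_nsmul_mem_coe_image_Ico {α : AddCircle T}
    (hα : ¬IsOfFinAddOrder α) (x : AddCircle T) {a b : ℝ} (hab : a ≤ b) (hba : b - a ≤ T) :
    Tendsto (fun N : ℕ =>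
      (#{n ∈ range N | x + n • α ∈ ((↑) '' Ico a b : Set (AddCircle T))} : ℝ) / N)
      atTop (𝓝 ((b - a) / T)) := by
  have h := ProbabilityMeasure.tendsto_measure_of_null_frontier_of_tendsto'
    (tendsto_empiricalMeasure_add_nsmul hα x) (haarAddCircle_frontier_coe_image_Ico a b)
  have h' := (ENNReal.tendsto_toReal (measure_ne_top _ _)).comp h
  rw [← tendsto_add_atTop_iff_nat 1]
  convert h' using 2 with N
  · exact (empiricalMeasure_real_apply _ _ _).symm
  · exact (haarAddCircle_real_coe_image_Ico hab hba).symm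

end AddCircle

instance : Fact (0 < 2 * π) := ⟨two_pi_pos⟩

theorem exists_eq_cos_sin {x : ℝ × ℝ} (hx : x.1 ^ 2 + x.2 ^ 2 = 1) :
    ∃ φ : ℝ, x = (cos φ, sin φ) := by
  obtain ⟨φ, hφ⟩ := (Complex.norm_eq_one_iff ⟨x.1, x.2⟩).1 (by
    rw [Complex.norm_def, Complex.normSq_mk, ← sq, ← sq, hx, sqrt_one])
  exact ⟨φ, Prod.ext (by simpa using congrArg Complex.re hφ.symm)
    (by simpa using congrArg Complex.im hφ.symm)⟩

theorem rot_cos_sin (θ φ : ℝ) : rot θ (cos φ, sin φ) = (cos (φ + θ), sin (φ + θ)) := by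
  simp only [rot, cos_add, sin_add, Prod.mk.injEq]
  constructor <;> ring

theorem rot_iterate_cos_sin (θ φ : ℝ) (n : ℕ) :
    (rot θ)^[n] (cos φ, sin φ) = (cos (φ + n * θ), sin (φ + n * θ)) := by
  induction n with
  | zero => simp
  | succ n ih =>
    rw [Function.iterate_succ_apply', ih, rot_cos_sin, Nat.cast_succ, add_one_mul, add_assoc]

theorem cos_sin_eq_cos_sin_iff {s t : ℝ} :
    (cos s, sin s) = (cos t, sin t) ↔ (s : AddCircle (2 * π)) = t := by
  rw [Prod.mk.injEq]
  refine ⟨fun h => Angle.cos_sin_inj h.1 h.2, fun h => ?_⟩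
  have h' : (s : Angle) = t := h
  exact ⟨by simpa using congrArg Angle.cos h', by simpa using congrArg Angle.sin h'⟩

theorem not_isOfFinAddOrder_coe_of_irrational_div_pi {θ : ℝ} (hθ : Irrational (θ / π)) :
    ¬IsOfFinAddOrder (θ : AddCircle (2 * π)) := by
  rw [AddCircle.not_isOfFinAddOrder_iff_forall_rat_ne_div]
  intro q hq
  refine hθ.ne_rat (2 * q) ?_
  rw [Rat.cast_mul, Rat.cast_ofNat, hq]
  field_simp

/-- Weyl equidistribution on the circle: if θ/π is irrational and x ∈ 𝕊¹, then the
orbit {R^n x} is equidistributed: for every arc {(cos t, sin t) : t ∈ [a,b)} of the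
circle, the proportion of n < N landing in the arc tends to its normalized length. -/
theorem orbit_equidistributed_on_circle
    (θ : ℝ) (hθ : Irrational (θ / Real.pi))
    (x : ℝ × ℝ) (hx : x.1^2 + x.2^2 = 1)
    (a b : ℝ) (hab : a ≤ b) (hlen : b - a ≤ 2 * Real.pi) :
    Filter.Tendsto
      (fun N : ℕ =>
        ((Finset.range N).filter
          (fun n => ∃ t ∈ Set.Ico a b, (rot θ)^[n] x = (Real.cos t, Real.sin t))).card
          / (N : ℝ))
      Filter.atTop (nhds ((b - a) / (2 * Real.pi))) := by
  obtain ⟨φ, rfl⟩ := exists_eq_cos_sin hx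
  have hmem (n : ℕ) : (∃ t ∈ Ico a b, (rot θ)^[n] (cos φ, sin φ) = (cos t, sin t)) ↔
      (φ : AddCircle (2 * π)) + n • (θ : AddCircle (2 * π)) ∈
        ((↑) '' Ico a b : Set (AddCircle (2 * π))) := by
    rw [rot_iterate_cos_sin, ← AddCircle.coe_nsmul, ← AddCircle.coe_add, nsmul_eq_mul]
    simp only [cos_sin_eq_cos_sin_iff, Set.mem_image]
    exact exists_congr fun t => and_congr_right fun _ => eq_comm
  simp_rw [Finset.filter_congr fun n _ => hmem n]
  exact AddCircle.tendsto_card_filter_add_nsmul_mem_coe_image_Ico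
    (not_isOfFinAddOrder_coe_of_irrational_div_pi hθ) _ hab hlen
end

section
/- The cosine of the angle θ = 2·arctan(1/2) equals 3/5 and its sine equals 4/5; consequently cos(nθ) and sin(nθ) are rationals whose denominators in lowest terms are exactly 5^n for n ≥ 1. -/
lemma pinwheel_cos : Real.cos (2 * Real.arctan (1/2)) = 3/5 := by
  rw [Real.cos_two_mul, Real.cos_arctan]
  have h : Real.sqrt (1 + (1/2:ℝ)^2) ^ 2 = 1 + (1/2:ℝ)^2 := by
    rw [Real.sq_sqrt]; positivity
  have hne : Real.sqrt (1 + (1/2:ℝ)^2) ≠ 0 := by positivity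
  field_simp
  nlinarith [h]

lemma pinwheel_sin : Real.sin (2 * Real.arctan (1/2)) = 4/5 := by
  rw [Real.sin_two_mul, Real.sin_arctan, Real.cos_arctan]
  have h : Real.sqrt (1 + (1/2:ℝ)^2) ^ 2 = 1 + (1/2:ℝ)^2 := by
    rw [Real.sq_sqrt]; positivity
  have hne : Real.sqrt (1 + (1/2:ℝ)^2) ≠ 0 := by positivity
  field_simp
  nlinarith [h]

/-- cos θ = 3/5 and sin θ = 4/5 for θ = 2·arctan(1/2); moreover cos(nθ) = a/5^n and
sin(nθ) = b/5^n with integers a, b not both divisible by 5, so the denominators in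
lowest terms are exactly 5^n (for at least one of the two). -/
theorem pinwheel_angle_cos_sin :
    Real.cos (2 * Real.arctan (1/2)) = 3/5 ∧
    Real.sin (2 * Real.arctan (1/2)) = 4/5 ∧
    ∀ n : ℕ, 1 ≤ n → ∃ a b : ℤ,
      Real.cos (n * (2 * Real.arctan (1/2))) = (a : ℝ) / 5 ^ n ∧
      Real.sin (n * (2 * Real.arctan (1/2))) = (b : ℝ) / 5 ^ n ∧
      (¬ (5 : ℤ) ∣ a ∨ ¬ (5 : ℤ) ∣ b) := by
  refine ⟨pinwheel_cos, pinwheel_sin, ?_⟩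
  set θ := 2 * Real.arctan (1/2) with hθ
  have key : ∀ n : ℕ, 1 ≤ n → ∃ a b : ℤ,
      Real.cos (n * θ) = (a : ℝ) / 5 ^ n ∧
      Real.sin (n * θ) = (b : ℝ) / 5 ^ n ∧ ¬ (5 : ℤ) ∣ (a + 2 * b) := by
    intro n hn
    induction n with
    | zero => omega
    | succ m ih =>
      rcases Nat.eq_or_lt_of_le hn with h1 | h1
      · refine ⟨3, 4, ?_, ?_, ?_⟩
        · simp [← h1]; exact pinwheel_cos
        · simp [← h1]; exact pinwheel_sin
        · decide
      · obtain ⟨a, b, hc, hs, hd⟩ := ih (by omega)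
        refine ⟨3 * a - 4 * b, 4 * a + 3 * b, ?_, ?_, ?_⟩
        · have : ((m + 1 : ℕ) : ℝ) * θ = m * θ + θ := by push_cast; ring
          rw [this, Real.cos_add, hc, hs, pinwheel_cos, pinwheel_sin]
          push_cast
          field_simp
          ring
        · have : ((m + 1 : ℕ) : ℝ) * θ = m * θ + θ := by push_cast; ring
          rw [this, Real.sin_add, hc, hs, pinwheel_cos, pinwheel_sin]
          push_cast
          field_simp
          ring
        · intro h
          apply hd
          have : (3 * a - 4 * b + 2 * (4 * a + 3 * b)) = 11 * a + 2 * b := by ring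
          omega
  intro n hn
  obtain ⟨a, b, hc, hs, hd⟩ := key n hn
  exact ⟨a, b, hc, hs, by rcases Int.emod_emod_of_dvd with _ ; by_contra h; push_neg at h; exact hd (by omega)⟩
end
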